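/- Let m ≥ 3 be an odd integer. Write each quaternion as x = z₁ + z₂·j where z₁ = x₁ + x₂·i and z₂ = x₃ + x₄·i are complex numbers, and define the real-valued polynomial functions I₂(x) = |z₁|² + |z₂|² = x₁²+x₂²+x₃²+x₄², I₄₁(x) = |z₁|²·|z₂|² = (x₁²+x₂²)(x₃²+x₄²), I₄₂(x) = z₁²·z̄₂² + z̄₁²·z₂², and I₆(x) = (|z₁|² - |z₂|²)·i·(z₁²·z̄₂² - z̄₁²·z₂²). Then I₂, I₄₁ and I₆ are invariant under G₁(m), i.e. I(g·x) = I(x) for all g ∈ G₁(m) and all x ∈ ℍ; I₄₂ is invariant under F₁(m); and I₄₂ changes sign under the generator [j,e₄]: I₄₂([j,e₄]·x) = -I₄₂(x) for all x. -/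

import Mathlib

noncomputable section

open Quaternion Real

/-- The quaternion `i`. -/
def qi : Quaternion ℝ := ⟨0, 1, 0, 0⟩
/-- The quaternion `j`. -/
def qj : Quaternion ℝ := ⟨0, 0, 1, 0⟩
/-- The quaternion `k`. -/
def qk : Quaternion ℝ := ⟨0, 0, 0, 1⟩
/-- The unit quaternion `e_s = cos(π/s) + sin(π/s) i`. -/
def es (s : ℕ) : Quaternion ℝ := ⟨Real.cos (Real.pi / s), Real.sin (Real.pi / s), 0, 0⟩

lemma norm_eq_one_of_normSq {a : Quaternion ℝ} (h : Quaternion.normSq a = 1) : ‖a‖ = 1 := by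
  have h2 : ‖a‖ * ‖a‖ = 1 := by rw [← Quaternion.normSq_eq_norm_mul_self, h]
  rcases mul_self_eq_one_iff.1 h2 with h' | h'
  · exact h'
  · nlinarith [norm_nonneg a]

lemma norm_qi : ‖qi‖ = 1 := norm_eq_one_of_normSq (by rw [Quaternion.normSq_def']; simp [qi])
lemma norm_qj : ‖qj‖ = 1 := norm_eq_one_of_normSq (by rw [Quaternion.normSq_def']; simp [qj])
lemma norm_qk : ‖qk‖ = 1 := norm_eq_one_of_normSq (by rw [Quaternion.normSq_def']; simp [qk])
lemma norm_es (s : ℕ) : ‖es s‖ = 1 :=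
  norm_eq_one_of_normSq (by
    rw [Quaternion.normSq_def']
    simp only [es]
    simp [Real.sin_sq_add_cos_sq, Real.cos_sq_add_sin_sq])

lemma self_mul_star_of_norm_one {a : Quaternion ℝ} (h : ‖a‖ = 1) : a * star a = 1 := by
  rw [Quaternion.self_mul_star]
  have h1 : Quaternion.normSq a = 1 := by rw [Quaternion.normSq_eq_norm_mul_self, h, mul_one]
  rw [h1]; norm_num

lemma star_mul_self_of_norm_one {a : Quaternion ℝ} (h : ‖a‖ = 1) : star a * a = 1 := by
  rw [Quaternion.star_mul_self]
  have h1 : Quaternion.normSq a = 1 := by rw [Quaternion.normSq_eq_norm_mul_self, h, mul_one]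
  rw [h1]; norm_num

/-- The rotation `[l,r] : x ↦ l̄ x r` of `ℝ⁴ ≅ ℍ`, for unit quaternions `l, r`. -/
def qrot (l r : Quaternion ℝ) (hl : ‖l‖ = 1) (hr : ‖r‖ = 1) :
    Quaternion ℝ ≃ₗ[ℝ] Quaternion ℝ where
  toFun x := star l * x * r
  invFun x := l * x * star r
  map_add' x y := by noncomm_ring
  map_smul' c x := by simp [mul_smul_comm, smul_mul_assoc]
  left_inv x := by
    have h : l * (star l * x * r) * star r = (l * star l) * x * (r * star r) := by noncomm_ring
    simp [h, self_mul_star_of_norm_one hl, self_mul_star_of_norm_one hr]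
  right_inv x := by
    have h : star l * (l * x * star r) * r = (star l * l) * x * (star r * r) := by noncomm_ring
    simp [h, star_mul_self_of_norm_one hl, star_mul_self_of_norm_one hr]

/-- The group `G₁(m)`. -/
def G1 (m : ℕ) : Subgroup (Quaternion ℝ ≃ₗ[ℝ] Quaternion ℝ) :=
  Subgroup.closure
    {qrot (es m) 1 (norm_es m) norm_one,
     qrot 1 qi norm_one norm_qi,
     qrot 1 qj norm_one norm_qj,
     qrot qj (es 4) norm_qj (norm_es 4)}

/-- The group `G₂(m)`. -/
def G2 (m : ℕ) : Subgroup (Quaternion ℝ ≃ₗ[ℝ] Quaternion ℝ) :=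
  Subgroup.closure
    {qrot (es m) 1 (norm_es m) norm_one,
     qrot 1 qi norm_one norm_qi,
     qrot (es (2 * m)) qj (norm_es (2 * m)) norm_qj,
     qrot qj (es 4) norm_qj (norm_es 4)}

/-- The group `G₃(m)`. -/
def G3 (m : ℕ) : Subgroup (Quaternion ℝ ≃ₗ[ℝ] Quaternion ℝ) :=
  Subgroup.closure
    {qrot (es m) 1 (norm_es m) norm_one,
     qrot 1 qi norm_one norm_qi,
     qrot qj 1 norm_qj norm_one,
     qrot 1 qj norm_one norm_qj}

/-- The group `F₁(m)`. -/
def F1 (m : ℕ) : Subgroup (Quaternion ℝ ≃ₗ[ℝ] Quaternion ℝ) :=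
  Subgroup.closure
    {qrot (es m) qi (norm_es m) norm_qi,
     qrot 1 qj norm_one norm_qj}

/-- The complex coordinate `z₁ = x₁ + x₂ i` of a quaternion `x = z₁ + z₂ j`. -/
def zc1 (x : Quaternion ℝ) : ℂ := ⟨x.re, x.imI⟩
/-- The complex coordinate `z₂ = x₃ + x₄ i` of a quaternion `x = z₁ + z₂ j`. -/
def zc2 (x : Quaternion ℝ) : ℂ := ⟨x.imJ, x.imK⟩

/-- `I₂(x) = |z₁|² + |z₂|² = x₁² + x₂² + x₃² + x₄²`. -/
def I2 (x : Quaternion ℝ) : ℝ := x.re ^ 2 + x.imI ^ 2 + x.imJ ^ 2 + x.imK ^ 2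
/-- `I₄₁(x) = |z₁|²·|z₂|²`. -/
def I41 (x : Quaternion ℝ) : ℝ := (x.re ^ 2 + x.imI ^ 2) * (x.imJ ^ 2 + x.imK ^ 2)
/-- `I₄₂(x) = z₁² z̄₂² + z̄₁² z₂²` (a real number, viewed in `ℂ`). -/
def I42 (x : Quaternion ℝ) : ℂ :=
  zc1 x ^ 2 * (starRingEnd ℂ) (zc2 x) ^ 2 + (starRingEnd ℂ) (zc1 x) ^ 2 * zc2 x ^ 2
/-- `I₆(x) = (|z₁|² - |z₂|²) · i · (z₁² z̄₂² - z̄₁² z₂²)` (a real number, viewed in `ℂ`). -/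
def I6 (x : Quaternion ℝ) : ℂ :=
  ((Complex.normSq (zc1 x) - Complex.normSq (zc2 x) : ℝ) : ℂ) * Complex.I *
    (zc1 x ^ 2 * (starRingEnd ℂ) (zc2 x) ^ 2 - (starRingEnd ℂ) (zc1 x) ^ 2 * zc2 x ^ 2)

/-!
In the coordinates `x = z₁ + z₂ j` the generators of `G₁(m)` act by
`(z₁, z₂) ↦ (ē_m z₁, ē_m z₂)`, `(i z₁, -i z₂)`, `(-z₂, z₁)` and `(z̄₂ e₄, -z̄₁ ē₄)`, and
`[e_m, i] = [1, i] ∘ [e_m, 1]`. With `P = z₁² z̄₂²` one has `I₄₁ = |z₁|² |z₂|²`, `I₄₂ = 2 Re P`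
and `I₆ = 2 (|z₂|² - |z₁|²) Im P`. The two diagonal generators fix `|z₁|`, `|z₂|` and `P`; the
other two exchange `|z₁|` and `|z₂|` and send `P` to `P̄`, resp. to `e₄⁴ P = -P`, so both
flip `Im P`. Finally `I₂ = ‖x‖²` is preserved by every `[l, r]`.
-/

open ComplexConjugate

theorem Subgroup.apply_smul_eq_of_mem_closure {G X α : Type*} [Group G] [MulAction G X]
    {S : Set G} {I : X → α} (hS : ∀ g ∈ S, ∀ x, I (g • x) = I x) {g : G}
    (hg : g ∈ Subgroup.closure S) (x : X) : I (g • x) = I x := by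
  induction hg using Subgroup.closure_induction generalizing x with
  | mem g hg => exact hS g hg x
  | one => rw [one_smul]
  | mul g h _ _ hg hh => rw [mul_smul, hg, hh]
  | inv g _ hg => rw [← hg, smul_inv_smul]

theorem qrot_apply (l r : ℍ[ℝ]) (hl : ‖l‖ = 1) (hr : ‖r‖ = 1) (x : ℍ[ℝ]) :
    qrot l r hl hr x = star l * x * r :=
  rfl

theorem qrot_es_qi_eq_mul (m : ℕ) :
    qrot (es m) qi (norm_es m) norm_qi =
      qrot 1 qi norm_one norm_qi * qrot (es m) 1 (norm_es m) norm_one := by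
  ext x : 1
  simp only [LinearEquiv.mul_apply, qrot_apply, star_one, one_mul, mul_one]

theorem I2_eq_normSq (x : ℍ[ℝ]) : I2 x = normSq x := by
  rw [I2, normSq_def']

theorem I2_qrot (l r : ℍ[ℝ]) (hl : ‖l‖ = 1) (hr : ‖r‖ = 1) (x : ℍ[ℝ]) :
    I2 (qrot l r hl hr x) = I2 x := by
  have h_unit {a : ℍ[ℝ]} (ha : ‖a‖ = 1) : normSq a = 1 := by
    rw [normSq_eq_norm_mul_self, ha, mul_one]
  rw [I2_eq_normSq, I2_eq_normSq, qrot_apply, map_mul, map_mul, normSq_star, h_unit hl,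
    h_unit hr, one_mul, mul_one]

/-- `e_s` inside `ℂ = ℝ + ℝ i ⊆ ℍ`. -/
def esC (s : ℕ) : ℂ := ⟨cos (π / s), sin (π / s)⟩

theorem normSq_esC (s : ℕ) : Complex.normSq (esC s) = 1 := by
  rw [esC, Complex.normSq_mk]
  linear_combination sin_sq_add_cos_sq (π / s)

theorem normSq_conj_esC (s : ℕ) : Complex.normSq (conj (esC s)) = 1 := by
  rw [Complex.normSq_conj, normSq_esC]

theorem esC_four_sq : esC 4 ^ 2 = Complex.I := by
  have hsqrt : √2 ^ 2 = 2 := sq_sqrt zero_le_two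
  apply Complex.ext <;> simp [esC, sq, cos_pi_div_four, sin_pi_div_four]
  linear_combination hsqrt / 2

theorem zc1_qrot_es_one (m : ℕ) (x : ℍ[ℝ]) :
    zc1 (qrot (es m) 1 (norm_es m) norm_one x) = conj (esC m) * zc1 x := by
  apply Complex.ext <;> simp [qrot_apply, zc1, re_mul, imI_mul] <;> simp [es, esC]

theorem zc2_qrot_es_one (m : ℕ) (x : ℍ[ℝ]) :
    zc2 (qrot (es m) 1 (norm_es m) norm_one x) = conj (esC m) * zc2 x := by
  apply Complex.ext <;> simp [qrot_apply, zc2, imJ_mul, imK_mul] <;> simp [es, esC]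

theorem zc1_qrot_one_qi (x : ℍ[ℝ]) : zc1 (qrot 1 qi norm_one norm_qi x) = Complex.I * zc1 x := by
  apply Complex.ext <;> simp [qrot_apply, zc1, re_mul, imI_mul] <;> simp [qi]

theorem zc2_qrot_one_qi (x : ℍ[ℝ]) :
    zc2 (qrot 1 qi norm_one norm_qi x) = -Complex.I * zc2 x := by
  apply Complex.ext <;> simp [qrot_apply, zc2, imJ_mul, imK_mul] <;> simp [qi]

theorem zc1_qrot_one_qj (x : ℍ[ℝ]) : zc1 (qrot 1 qj norm_one norm_qj x) = -zc2 x := by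
  apply Complex.ext <;> simp [qrot_apply, zc1, zc2, re_mul, imI_mul] <;> simp [qj]

theorem zc2_qrot_one_qj (x : ℍ[ℝ]) : zc2 (qrot 1 qj norm_one norm_qj x) = zc1 x := by
  apply Complex.ext <;> simp [qrot_apply, zc1, zc2, imJ_mul, imK_mul] <;> simp [qj]

theorem zc1_qrot_qj_es_four (x : ℍ[ℝ]) :
    zc1 (qrot qj (es 4) norm_qj (norm_es 4) x) = conj (zc2 x) * esC 4 := by
  apply Complex.ext <;> simp [qrot_apply, zc1, zc2, re_mul, imI_mul] <;> simp [qj, es, esC]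

theorem zc2_qrot_qj_es_four (x : ℍ[ℝ]) :
    zc2 (qrot qj (es 4) norm_qj (norm_es 4) x) = -(conj (zc1 x) * conj (esC 4)) := by
  apply Complex.ext <;> simp [qrot_apply, zc1, zc2, imJ_mul, imK_mul] <;> simp [qj, es, esC] <;>
    ring

def crossTerm (x : ℍ[ℝ]) : ℂ := zc1 x ^ 2 * conj (zc2 x) ^ 2

theorem conj_crossTerm (x : ℍ[ℝ]) : conj (crossTerm x) = conj (zc1 x) ^ 2 * zc2 x ^ 2 := by
  rw [crossTerm, map_mul, map_pow, map_pow, Complex.conj_conj]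

theorem I41_eq_normSq_mul (x : ℍ[ℝ]) :
    I41 x = Complex.normSq (zc1 x) * Complex.normSq (zc2 x) := by
  rw [I41, zc1, zc2, Complex.normSq_mk, Complex.normSq_mk]
  ring

theorem I42_eq_re_crossTerm (x : ℍ[ℝ]) : I42 x = (2 * (crossTerm x).re : ℝ) := by
  rw [← Complex.add_conj, conj_crossTerm, crossTerm, I42]

theorem I6_eq_im_crossTerm (x : ℍ[ℝ]) :
    I6 x = (2 * (Complex.normSq (zc2 x) - Complex.normSq (zc1 x)) * (crossTerm x).im : ℝ) := by
  have h : zc1 x ^ 2 * conj (zc2 x) ^ 2 - conj (zc1 x) ^ 2 * zc2 x ^ 2 =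
      (2 * (crossTerm x).im : ℝ) * Complex.I := by
    rw [← conj_crossTerm, ← Complex.sub_conj, crossTerm]
  rw [I6, h]
  push_cast
  linear_combination (2 * (Complex.normSq (zc1 x) - Complex.normSq (zc2 x) : ℂ) *
    (crossTerm x).im) * Complex.I_sq

section Diagonal

variable {x y : ℍ[ℝ]} {a b : ℂ}

theorem crossTerm_eq_of_diagonal (ha : Complex.normSq a = 1) (hb : b = a ∨ b = -a)
    (h₁ : zc1 y = a * zc1 x) (h₂ : zc2 y = b * zc2 x) : crossTerm y = crossTerm x := by
  have hab : (a * conj b) ^ 2 = 1 := by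
    obtain rfl | rfl := hb <;> simp [Complex.mul_conj, ha]
  rw [crossTerm, crossTerm, h₁, h₂, map_mul]
  linear_combination (zc1 x ^ 2 * conj (zc2 x) ^ 2) * hab

theorem normSq_zc_eq_of_diagonal (ha : Complex.normSq a = 1) (hb : b = a ∨ b = -a)
    (h₁ : zc1 y = a * zc1 x) (h₂ : zc2 y = b * zc2 x) :
    Complex.normSq (zc1 y) = Complex.normSq (zc1 x) ∧
      Complex.normSq (zc2 y) = Complex.normSq (zc2 x) := by
  obtain rfl | rfl := hb <;> simp [h₁, h₂, ha]

theorem I41_eq_of_diagonal (ha : Complex.normSq a = 1) (hb : b = a ∨ b = -a)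
    (h₁ : zc1 y = a * zc1 x) (h₂ : zc2 y = b * zc2 x) : I41 y = I41 x := by
  obtain ⟨hn₁, hn₂⟩ := normSq_zc_eq_of_diagonal ha hb h₁ h₂
  rw [I41_eq_normSq_mul, I41_eq_normSq_mul, hn₁, hn₂]

theorem I42_eq_of_diagonal (ha : Complex.normSq a = 1) (hb : b = a ∨ b = -a)
    (h₁ : zc1 y = a * zc1 x) (h₂ : zc2 y = b * zc2 x) : I42 y = I42 x := by
  rw [I42_eq_re_crossTerm, I42_eq_re_crossTerm, crossTerm_eq_of_diagonal ha hb h₁ h₂]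

theorem I6_eq_of_diagonal (ha : Complex.normSq a = 1) (hb : b = a ∨ b = -a)
    (h₁ : zc1 y = a * zc1 x) (h₂ : zc2 y = b * zc2 x) : I6 y = I6 x := by
  obtain ⟨hn₁, hn₂⟩ := normSq_zc_eq_of_diagonal ha hb h₁ h₂
  rw [I6_eq_im_crossTerm, I6_eq_im_crossTerm, hn₁, hn₂, crossTerm_eq_of_diagonal ha hb h₁ h₂]

end Diagonal

section Swap

variable {x y : ℍ[ℝ]}

theorem I41_eq_of_swap (h₁ : Complex.normSq (zc1 y) = Complex.normSq (zc2 x))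
    (h₂ : Complex.normSq (zc2 y) = Complex.normSq (zc1 x)) : I41 y = I41 x := by
  rw [I41_eq_normSq_mul, I41_eq_normSq_mul, h₁, h₂, mul_comm]

theorem I6_eq_of_swap (h₁ : Complex.normSq (zc1 y) = Complex.normSq (zc2 x))
    (h₂ : Complex.normSq (zc2 y) = Complex.normSq (zc1 x))
    (hP : (crossTerm y).im = -(crossTerm x).im) : I6 y = I6 x := by
  rw [I6_eq_im_crossTerm, I6_eq_im_crossTerm, h₁, h₂, hP]
  push_cast
  ring

end Swap

theorem normSq_zc1_qrot_one_qj (x : ℍ[ℝ]) :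
    Complex.normSq (zc1 (qrot 1 qj norm_one norm_qj x)) = Complex.normSq (zc2 x) := by
  rw [zc1_qrot_one_qj, Complex.normSq_neg]

theorem normSq_zc2_qrot_one_qj (x : ℍ[ℝ]) :
    Complex.normSq (zc2 (qrot 1 qj norm_one norm_qj x)) = Complex.normSq (zc1 x) := by
  rw [zc2_qrot_one_qj]

theorem crossTerm_qrot_one_qj (x : ℍ[ℝ]) :
    crossTerm (qrot 1 qj norm_one norm_qj x) = conj (crossTerm x) := by
  rw [conj_crossTerm, crossTerm, zc1_qrot_one_qj, zc2_qrot_one_qj]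
  ring

theorem normSq_zc1_qrot_qj_es_four (x : ℍ[ℝ]) :
    Complex.normSq (zc1 (qrot qj (es 4) norm_qj (norm_es 4) x)) = Complex.normSq (zc2 x) := by
  rw [zc1_qrot_qj_es_four, Complex.normSq_mul, Complex.normSq_conj, normSq_esC, mul_one]

theorem normSq_zc2_qrot_qj_es_four (x : ℍ[ℝ]) :
    Complex.normSq (zc2 (qrot qj (es 4) norm_qj (norm_es 4) x)) = Complex.normSq (zc1 x) := by
  rw [zc2_qrot_qj_es_four, Complex.normSq_neg, Complex.normSq_mul, Complex.normSq_conj,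
    Complex.normSq_conj, normSq_esC, mul_one]

theorem crossTerm_qrot_qj_es_four (x : ℍ[ℝ]) :
    crossTerm (qrot qj (es 4) norm_qj (norm_es 4) x) = -crossTerm x := by
  rw [crossTerm, crossTerm, zc1_qrot_qj_es_four, zc2_qrot_qj_es_four]
  simp only [map_neg, map_mul, Complex.conj_conj]
  linear_combination (zc1 x ^ 2 * conj (zc2 x) ^ 2 * (esC 4 ^ 2 + Complex.I)) * esC_four_sq +
    (zc1 x ^ 2 * conj (zc2 x) ^ 2) * Complex.I_sq

theorem I2_apply_of_mem_G1 {m : ℕ} {g : ℍ[ℝ] ≃ₗ[ℝ] ℍ[ℝ]} (hg : g ∈ G1 m) (x : ℍ[ℝ]) :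
    I2 (g x) = I2 x := by
  refine Subgroup.apply_smul_eq_of_mem_closure (I := I2) ?_ hg x
  simp only [Set.mem_insert_iff, Set.mem_singleton_iff, forall_eq_or_imp, forall_eq]
  exact ⟨I2_qrot _ _ _ _, I2_qrot _ _ _ _, I2_qrot _ _ _ _, I2_qrot _ _ _ _⟩

theorem I41_apply_of_mem_G1 {m : ℕ} {g : ℍ[ℝ] ≃ₗ[ℝ] ℍ[ℝ]} (hg : g ∈ G1 m) (x : ℍ[ℝ]) :
    I41 (g x) = I41 x := by
  refine Subgroup.apply_smul_eq_of_mem_closure (I := I41) ?_ hg x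
  simp only [Set.mem_insert_iff, Set.mem_singleton_iff, forall_eq_or_imp, forall_eq,
    LinearEquiv.smul_def]
  refine ⟨fun x => ?_, fun x => ?_, fun x => ?_, fun x => ?_⟩
  · exact I41_eq_of_diagonal (normSq_conj_esC m) (.inl rfl)
      (zc1_qrot_es_one m x) (zc2_qrot_es_one m x)
  · exact I41_eq_of_diagonal Complex.normSq_I (.inr rfl) (zc1_qrot_one_qi x) (zc2_qrot_one_qi x)
  · exact I41_eq_of_swap (normSq_zc1_qrot_one_qj x) (normSq_zc2_qrot_one_qj x)
  · exact I41_eq_of_swap (normSq_zc1_qrot_qj_es_four x) (normSq_zc2_qrot_qj_es_four x)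

theorem I6_apply_of_mem_G1 {m : ℕ} {g : ℍ[ℝ] ≃ₗ[ℝ] ℍ[ℝ]} (hg : g ∈ G1 m) (x : ℍ[ℝ]) :
    I6 (g x) = I6 x := by
  refine Subgroup.apply_smul_eq_of_mem_closure (I := I6) ?_ hg x
  simp only [Set.mem_insert_iff, Set.mem_singleton_iff, forall_eq_or_imp, forall_eq,
    LinearEquiv.smul_def]
  refine ⟨fun x => ?_, fun x => ?_, fun x => ?_, fun x => ?_⟩
  · exact I6_eq_of_diagonal (normSq_conj_esC m) (.inl rfl)
      (zc1_qrot_es_one m x) (zc2_qrot_es_one m x)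
  · exact I6_eq_of_diagonal Complex.normSq_I (.inr rfl) (zc1_qrot_one_qi x) (zc2_qrot_one_qi x)
  · exact I6_eq_of_swap (normSq_zc1_qrot_one_qj x) (normSq_zc2_qrot_one_qj x)
      (by rw [crossTerm_qrot_one_qj, Complex.conj_im])
  · exact I6_eq_of_swap (normSq_zc1_qrot_qj_es_four x) (normSq_zc2_qrot_qj_es_four x)
      (by rw [crossTerm_qrot_qj_es_four, Complex.neg_im])

theorem I42_apply_of_mem_F1 {m : ℕ} {g : ℍ[ℝ] ≃ₗ[ℝ] ℍ[ℝ]} (hg : g ∈ F1 m) (x : ℍ[ℝ]) :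
    I42 (g x) = I42 x := by
  refine Subgroup.apply_smul_eq_of_mem_closure (I := I42) ?_ hg x
  simp only [Set.mem_insert_iff, Set.mem_singleton_iff, forall_eq_or_imp, forall_eq,
    LinearEquiv.smul_def]
  refine ⟨fun x => ?_, fun x => ?_⟩
  · rw [qrot_es_qi_eq_mul, LinearEquiv.mul_apply,
      I42_eq_of_diagonal Complex.normSq_I (.inr rfl) (zc1_qrot_one_qi _) (zc2_qrot_one_qi _)]
    exact I42_eq_of_diagonal (normSq_conj_esC m) (.inl rfl)
      (zc1_qrot_es_one m x) (zc2_qrot_es_one m x)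
  · rw [I42_eq_re_crossTerm, I42_eq_re_crossTerm, crossTerm_qrot_one_qj, Complex.conj_re]

theorem I42_qrot_qj_es_four (x : ℍ[ℝ]) :
    I42 (qrot qj (es 4) norm_qj (norm_es 4) x) = -I42 x := by
  rw [I42_eq_re_crossTerm, I42_eq_re_crossTerm, crossTerm_qrot_qj_es_four, Complex.neg_re]
  push_cast
  ring

theorem invariants_of_G1_general (m : ℕ) :
    (∀ g ∈ G1 m, ∀ x : Quaternion ℝ, I2 (g x) = I2 x) ∧
    (∀ g ∈ G1 m, ∀ x : Quaternion ℝ, I41 (g x) = I41 x) ∧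
    (∀ g ∈ G1 m, ∀ x : Quaternion ℝ, I6 (g x) = I6 x) ∧
    (∀ g ∈ F1 m, ∀ x : Quaternion ℝ, I42 (g x) = I42 x) ∧
    (∀ x : Quaternion ℝ, I42 (qrot qj (es 4) norm_qj (norm_es 4) x) = - I42 x) :=
  ⟨fun _ hg => I2_apply_of_mem_G1 hg, fun _ hg => I41_apply_of_mem_G1 hg,
    fun _ hg => I6_apply_of_mem_G1 hg, fun _ hg => I42_apply_of_mem_F1 hg, I42_qrot_qj_es_four⟩

/-- `I₂`, `I₄₁` and `I₆` are invariant under `G₁(m)`; `I₄₂` is invariant under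
`F₁(m)` and changes sign under the generator `[j, e₄]`. -/
theorem invariants_of_G1 (m : ℕ) (hm : 3 ≤ m) (hodd : Odd m) :
    (∀ g ∈ G1 m, ∀ x : Quaternion ℝ, I2 (g x) = I2 x) ∧
    (∀ g ∈ G1 m, ∀ x : Quaternion ℝ, I41 (g x) = I41 x) ∧
    (∀ g ∈ G1 m, ∀ x : Quaternion ℝ, I6 (g x) = I6 x) ∧
    (∀ g ∈ F1 m, ∀ x : Quaternion ℝ, I42 (g x) = I42 x) ∧
    (∀ x : Quaternion ℝ, I42 (qrot qj (es 4) norm_qj (norm_es 4) x) = - I42 x) :=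
  invariants_of_G1_general m
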